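/- Leaves of execution models are well-founded models of the extending instances: Let C be a CP-theory, ⟨T, I, E⟩ an execution model of C, l a leaf of T, and σ a C-selection extending σ(l). Then every terminal well-founded induction of the instance C^σ has as its limit the total three-valued interpretation mapping each atom of I(l) to t and every other atom to f; that is, I(l) is the exact well-founded model of C^σ. -/

import Mathlib

noncomputable section
open scoped Classical

namespace CP

/-- The three truth values. -/
inductive TV where
  | f | u | t
deriving DecidableEq

namespace TV

/-- Rank of a truth value in the truth order `f ≤_t u ≤_t t`. -/
def rank : TV → ℕ
  | f => 0
  | u => 1
  | t => 2

/-- Minimum in the truth order. -/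
def tmin (a b : TV) : TV := if rank a ≤ rank b then a else b

/-- Maximum in the truth order. -/
def tmax (a b : TV) : TV := if rank a ≤ rank b then b else a

/-- Kleene negation. -/
def tneg : TV → TV
  | f => t
  | u => u
  | t => f

/-- The precision order on truth values: `u ≤_p f` and `u ≤_p t` (and reflexivity). -/
def lep (a b : TV) : Prop := a = u ∨ a = b

end TV

/-- Pointwise precision order on three-valued interpretations. -/
def leP {A : Type} (ν ν' : A → TV) : Prop := ∀ a, TV.lep (ν a) (ν' a)

/-- Propositional formulas over a type `A` of atoms. -/
inductive Form (A : Type) where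
  | atom : A → Form A
  | conj : Form A → Form A → Form A
  | disj : Form A → Form A → Form A
  | neg  : Form A → Form A

namespace Form

variable {A : Type}

/-- Two-valued satisfaction of a formula in an interpretation (a set of atoms). -/
def sat (I : Set A) : Form A → Prop
  | .atom a => a ∈ I
  | .conj φ ψ => sat I φ ∧ sat I ψ
  | .disj φ ψ => sat I φ ∨ sat I ψ
  | .neg φ => ¬ sat I φ

/-- Kleene three-valued valuation of a formula. -/
def val (ν : A → TV) : Form A → TV
  | .atom a => ν a
  | .conj φ ψ => TV.tmin (val ν φ) (val ν ψ)
  | .disj φ ψ => TV.tmax (val ν φ) (val ν ψ)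
  | .neg φ => TV.tneg (val ν φ)

/-- A formula is positive if it contains no negation. -/
def Positive : Form A → Prop
  | .atom _ => True
  | .conj φ ψ => Positive φ ∧ Positive ψ
  | .disj φ ψ => Positive φ ∧ Positive ψ
  | .neg _ => False

/-- The set of atoms occurring in a formula. -/
def atoms : Form A → Set A
  | .atom a => {a}
  | .conj φ ψ => atoms φ ∪ atoms ψ
  | .disj φ ψ => atoms φ ∪ atoms ψ
  | .neg φ => atoms φ

/-- Atoms occurring under a number of negations of parity `b` (`true` = odd). -/
def atomsPar : Bool → Form A → Set A
  | b, .atom a => if b then ∅ else {a}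
  | b, .conj φ ψ => atomsPar b φ ∪ atomsPar b ψ
  | b, .disj φ ψ => atomsPar b φ ∪ atomsPar b ψ
  | b, .neg φ => atomsPar (!b) φ

/-- Atoms occurring within the scope of an odd number of negations. -/
def natoms (φ : Form A) : Set A := atomsPar true φ

end Form

/-- A CP-law: a nonempty head list of distinct atoms with probabilities in `(0,1]`
summing to at most `1`, together with a body formula. -/
structure CPLaw (A : Type) where
  head : List (A × ℝ)
  body : Form A
  head_ne : head ≠ []
  head_nodup : (head.map Prod.fst).Nodup
  head_pos : ∀ p ∈ head, 0 < p.2 ∧ p.2 ≤ 1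
  head_sum : (head.map Prod.snd).sum ≤ 1

namespace CPLaw

variable {A : Type}

/-- `head_At(r)`: the set of atoms occurring in the head of `r`. -/
def headAt (r : CPLaw A) : Set A := {a | a ∈ r.head.map Prod.fst}

/-- The sum `Σᵢ αᵢ` of the probabilities in the head of `r`. -/
def psum (r : CPLaw A) : ℝ := (r.head.map Prod.snd).sum

end CPLaw

/-- A probabilistic process: a finite rooted tree (given by a parent function with a
depth function ensuring well-foundedness), with an interpretation, an edge probability
and a path probability attached to each node, together with (for use in execution
models) a CP-law index `rule` attached to each node and, for each non-root node, the
`choice` in the head of the rule fired at its parent that it corresponds to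
(`none` is the extra child carrying the leftover probability `1 - Σᵢ αᵢ`). -/
structure Proc (A R : Type) where
  Node : Type
  [fintypeNode : Fintype Node]
  root : Node
  parent : Node → Node
  depth : Node → ℕ
  interp : Node → Set A
  prob : Node → ℝ
  pathProb : Node → ℝ
  rule : Node → R
  choice : Node → Option ℕ
  depth_root : depth root = 0
  depth_parent : ∀ s, s ≠ root → depth s = depth (parent s) + 1
  pathProb_root : pathProb root = 1
  pathProb_parent : ∀ s, s ≠ root → pathProb s = pathProb (parent s) * prob s

attribute [instance] Proc.fintypeNode

namespace Proc

variable {A R : Type} (W : Proc A R)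

/-- `s'` is a child of `s`. -/
def isChild (s' s : W.Node) : Prop := s' ≠ W.root ∧ W.parent s' = s

/-- `s` is a leaf. -/
def isLeaf (s : W.Node) : Prop := ∀ s', ¬ W.isChild s' s

/-- `strictAnc a b`: `a` is a strict ancestor of `b`. -/
def strictAnc (a b : W.Node) : Prop :=
  Relation.TransGen (fun y x => W.isChild y x) b a

end Proc

variable {A R : Type}

/-- `R_E(s)`: the CP-laws that have not fired at any strict ancestor of `s`. -/
def RE (W : Proc A R) (s : W.Node) : Set R :=
  {r | ∀ s', W.strictAnc s' s → W.rule s' ≠ r}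

/-- The CP-law `E(s)` fires at the non-leaf node `s`: `s` has exactly one child for
each head element `(Aᵢ, αᵢ)` (with interpretation `I(s) ∪ {Aᵢ}` and edge probability
`αᵢ`), plus exactly one extra child with unchanged interpretation and edge probability
`1 - Σᵢ αᵢ` in case `Σᵢ αᵢ < 1`. -/
def FiresAt (C : R → CPLaw A) (W : Proc A R) (s : W.Node) : Prop :=
  (∀ s', W.isChild s' s →
     (∀ i, W.choice s' = some i →
        ∃ h : i < (C (W.rule s)).head.length,
          W.interp s' = insert ((C (W.rule s)).head.get ⟨i, h⟩).1 (W.interp s) ∧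
          W.prob s' = ((C (W.rule s)).head.get ⟨i, h⟩).2) ∧
     (W.choice s' = none →
        (C (W.rule s)).psum < 1 ∧ W.interp s' = W.interp s ∧
          W.prob s' = 1 - (C (W.rule s)).psum)) ∧
  (∀ s₁ s₂, W.isChild s₁ s → W.isChild s₂ s → W.choice s₁ = W.choice s₂ → s₁ = s₂) ∧
  (∀ i, i < (C (W.rule s)).head.length → ∃ s', W.isChild s' s ∧ W.choice s' = some i) ∧
  ((C (W.rule s)).psum < 1 → ∃ s', W.isChild s' s ∧ W.choice s' = none)

/-- `⟨W, I, E⟩` is a weak execution model of the CP-theory `C`. -/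
def IsWEM (C : R → CPLaw A) (W : Proc A R) : Prop :=
  W.interp W.root = (∅ : Set A) ∧
  (∀ s, s ≠ W.root → 0 ≤ W.prob s ∧ W.prob s ≤ 1) ∧
  (∀ s, ¬ W.isLeaf s →
    (∑ s' ∈ Finset.univ.filter (fun s' => W.isChild s' s), W.prob s') = 1) ∧
  (∀ s, ¬ W.isLeaf s →
    W.rule s ∈ RE W s ∧ Form.sat (W.interp s) (C (W.rule s)).body ∧ FiresAt C W s) ∧
  (∀ l, W.isLeaf l → ∀ r ∈ RE W l, ¬ Form.sat (W.interp l) (C r).body)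

/-- `ν 0, …, ν n` is a hypothetical derivation sequence at node `s`. -/
def IsHDS (C : R → CPLaw A) (W : Proc A R) (s : W.Node)
    (ν : ℕ → A → TV) (n : ℕ) : Prop :=
  (∀ a, ν 0 a = if a ∈ W.interp s then TV.t else TV.f) ∧
  ∀ i, i < n → ∃ r ∈ RE W s,
    Form.val (ν i) (C r).body ≠ TV.f ∧
    (∀ p ∈ (C r).headAt, ν i p = TV.f → ν (i+1) p = TV.u) ∧
    (∀ p, ¬ (p ∈ (C r).headAt ∧ ν i p = TV.f) → ν (i+1) p = ν i p)

/-- The hypothetical derivation sequence `ν 0, …, ν n` at `s` is terminal. -/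
def HDSTerminal (C : R → CPLaw A) (W : Proc A R) (s : W.Node)
    (ν : ℕ → A → TV) (n : ℕ) : Prop :=
  ¬ ∃ r ∈ RE W s, Form.val (ν n) (C r).body ≠ TV.f ∧
      ∃ p ∈ (C r).headAt, ν n p = TV.f

/-- `⟨W, I, E⟩` is an execution model of `C`: a weak execution model in which, at every
non-leaf node, the body of the fired CP-law is not unknown in the potential of the
node (the common limit of all terminal hypothetical derivation sequences). -/
def IsExec (C : R → CPLaw A) (W : Proc A R) : Prop :=
  IsWEM C W ∧
  ∀ s, ¬ W.isLeaf s → ∀ ν n, IsHDS C W s ν n → HDSTerminal C W s ν n →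
    Form.val (ν n) (C (W.rule s)).body ≠ TV.u

/-- `π_T`: the probability distribution on interpretations induced by a process. -/
def piT (W : Proc A R) (J : Set A) : ℝ :=
  ∑ l ∈ Finset.univ.filter (fun l => W.isLeaf l ∧ W.interp l = J), W.pathProb l

/-- A `C`-selection: for each CP-law occurrence, either a head element (`some i`)
or the distinguished `∅` outcome (`none`), which carries probability `1 - Σᵢ αᵢ`. -/
abbrev Sel (C : R → CPLaw A) : Type := (r : R) → Option (Fin (C r).head.length)

/-- The probability `σ^α(r)` of the outcome selected for `r` by `σ`. -/
def selWeight (C : R → CPLaw A) (σ : Sel C) (r : R) : ℝ :=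
  match σ r with
  | some i => ((C r).head.get i).2
  | none => 1 - (C r).psum

/-- The probability `P(σ) = Π_{r ∈ C} σ^α(r)` of a `C`-selection. -/
def selProb [Fintype R] (C : R → CPLaw A) (σ : Sel C) : ℝ :=
  ∏ r, selWeight C σ r

/-- `σ` extends the partial selection `σ(s)` determined by the path from the root
to `s`: for every strict ancestor `s'` of `s`, `σ` assigns to the rule fired at `s'`
the head element corresponding to the child of `s'` lying on the path to `s`. -/
def ExtendsPathSel (C : R → CPLaw A) (W : Proc A R) (σ : Sel C) (s : W.Node) : Prop :=
  ∀ s' s'', W.strictAnc s' s → W.isChild s'' s' → (s'' = s ∨ W.strictAnc s'' s) →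
    (σ (W.rule s')).map Fin.val = W.choice s''

/-- `ν` updated to map `p` to true. -/
def updT {A : Type} (ν : A → TV) (p : A) : A → TV :=
  fun a => if a = p then TV.t else ν a

/-- One step of a well-founded induction for the logic program `P` (a family of
rules, each a pair of a head atom and a body formula): either make the head of a
rule with true body true, or make an unfounded set false. -/
def WFStep {A Q : Type} (P : Q → A × Form A) (ν ν' : A → TV) : Prop :=
  (∃ q, Form.val ν (P q).2 = TV.t ∧ ν' = updT ν (P q).1) ∨
  (∃ U : Set A, (∀ p ∈ U, ν p = TV.u) ∧
    (∀ p, ν' p = if p ∈ U then TV.f else ν p) ∧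
    (∀ q, (P q).1 ∈ U → Form.val ν' (P q).2 = TV.f))

/-- `ν 0, …, ν m` is a well-founded induction of the logic program `P`. -/
def IsWFI {A Q : Type} (P : Q → A × Form A) (ν : ℕ → A → TV) (m : ℕ) : Prop :=
  (∀ a, ν 0 a = TV.u) ∧ ∀ j, j < m → WFStep P (ν j) (ν (j+1))

/-- The well-founded induction with limit `ν m` is terminal: no further step yields a
strictly more precise interpretation. -/
def WFITerminal {A Q : Type} (P : Q → A × Form A) (ν : ℕ → A → TV) (m : ℕ) : Prop :=
  ∀ ν', WFStep P (ν m) ν' → leP (ν m) ν' → ν' = ν m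

/-- The instance `C^σ`: the logic program consisting of the rules
`σ^h(r) ← body(r)` for all `r` with `σ^h(r) ≠ ∅`. -/
def instProg (C : R → CPLaw A) (σ : Sel C) :
    {r : R // (σ r).isSome} → A × Form A :=
  fun q => (((C q.1).head.get ((σ q.1).get q.2)).1, (C q.1).body)

/-- The logic program `P` has an exact well-founded model equal to `J`: some terminal
well-founded induction of `P` has as its limit the total interpretation corresponding
to `J`. -/
def LimitIs {A Q : Type} (P : Q → A × Form A) (J : Set A) : Prop :=
  ∃ ν m, IsWFI P ν m ∧ WFITerminal P ν m ∧
    ∀ a, ν m a = if a ∈ J then TV.t else TV.f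

/-- The instance based semantics `μ_C`. -/
def muC [Fintype R] (C : R → CPLaw A) (J : Set A) : ℝ :=
  ∑ σ ∈ Finset.univ.filter (fun σ : Sel C => LimitIs (instProg C σ) J),
    selProb C σ

/-!
Let `J = I(l)` and let `s₀, …, sₖ = l` be the path from the root to `l`. Kleene valuation is
monotone in the precision order, so an interpretation below (the total interpretation of) `J`
evaluates formulas consistently with `J`.

Every stage of a well-founded induction of `C^σ` lies below `J`. A rule made true has a body
true in `J`; at a leaf this only happens for a CP-law fired on the path, whose head selected by
`σ` lies in `J`. An unfounded set cannot meet `J`: its first atom caused along the path is the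
selected head of `E(sₜ)`, whose body is true in the potential of `sₜ` (this is where the
execution-model condition enters) and yet false after the unfounded-set step.

Conversely, by induction along the path, the limit `ν m` lies above the potential of `sₜ` (the
atoms false there but unknown in `ν m` are unfounded), so the body of `E(sₜ)` is true in `ν m`
and the atom it causes is derived. Finally the remaining unknown atoms are unfounded, because
every rule with a head outside `J` is still available at the leaf, so its body is false in `J`.
-/

namespace TV

lemma lep_tmin {a a' b b' : TV} (ha : lep a a') (hb : lep b b') :
    lep (tmin a b) (tmin a' b') := by
  cases a <;> cases a' <;> cases b <;> cases b' <;> simp_all [lep, tmin, rank]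

lemma lep_tmax {a a' b b' : TV} (ha : lep a a') (hb : lep b b') :
    lep (tmax a b) (tmax a' b') := by
  cases a <;> cases a' <;> cases b <;> cases b' <;> simp_all [lep, tmax, rank]

lemma lep_tneg {a a' : TV} (ha : lep a a') : lep (tneg a) (tneg a') := by
  cases a <;> cases a' <;> simp_all [lep, tneg]

end TV

def ofSet {A : Type} (J : Set A) : A → TV := fun a => if a ∈ J then TV.t else TV.f

lemma leP_ofSet_iff {A : Type} {ν : A → TV} {J : Set A} :
    leP ν (ofSet J) ↔ (∀ a, ν a = TV.t → a ∈ J) ∧ (∀ a, ν a = TV.f → a ∉ J) := by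
  refine ⟨fun h => ⟨fun a ha => ?_, fun a ha => ?_⟩, fun h a => ?_⟩
  · rcases h a with h' | h' <;> by_cases haJ : a ∈ J <;> simp_all [ofSet]
  · rcases h a with h' | h' <;> by_cases haJ : a ∈ J <;> simp_all [ofSet]
  · cases hν : ν a <;> by_cases haJ : a ∈ J <;> simp_all [TV.lep, ofSet]

namespace Form

variable {A : Type}

lemma val_mono {ν ν' : A → TV} (h : leP ν ν') (φ : Form A) :
    TV.lep (val ν φ) (val ν' φ) := by
  induction φ with
  | atom a => exact h a
  | conj φ ψ ihφ ihψ => exact TV.lep_tmin ihφ ihψ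
  | disj φ ψ ihφ ihψ => exact TV.lep_tmax ihφ ihψ
  | neg φ ih => exact TV.lep_tneg ih

lemma val_eq_of_leP {ν ν' : A → TV} (h : leP ν ν') {φ : Form A} (hφ : val ν φ ≠ TV.u) :
    val ν' φ = val ν φ :=
  ((val_mono h φ).resolve_left hφ).symm

lemma val_ofSet (J : Set A) (φ : Form A) :
    val (ofSet J) φ = if sat J φ then TV.t else TV.f := by
  induction φ with
  | atom a => by_cases h : a ∈ J <;> simp [val, sat, ofSet, h]
  | conj φ ψ ihφ ihψ =>
    by_cases h₁ : sat J φ <;> by_cases h₂ : sat J ψ <;>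
      simp [val, sat, ihφ, ihψ, h₁, h₂, TV.tmin, TV.rank]
  | disj φ ψ ihφ ihψ =>
    by_cases h₁ : sat J φ <;> by_cases h₂ : sat J ψ <;>
      simp [val, sat, ihφ, ihψ, h₁, h₂, TV.tmax, TV.rank]
  | neg φ ih => by_cases h : sat J φ <;> simp [val, sat, ih, h, TV.tneg]

lemma sat_of_leP_ofSet {ν : A → TV} {J : Set A} {φ : Form A} (h : leP ν (ofSet J))
    (hφ : val ν φ = TV.t) : sat J φ := by
  have := val_eq_of_leP h (φ := φ) (by rw [hφ]; decide)
  rw [hφ, val_ofSet] at this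
  by_contra hns
  rw [if_neg hns] at this
  exact absurd this (by decide)

lemma val_ne_f_of_leP_ofSet {ν : A → TV} {J : Set A} {φ : Form A} (h : leP ν (ofSet J))
    (hφ : sat J φ) : val ν φ ≠ TV.f := by
  intro hf
  have := val_eq_of_leP h (φ := φ) (by rw [hf]; decide)
  rw [hf, val_ofSet, if_pos hφ] at this
  exact absurd this (by decide)

end Form

namespace Proc

variable {A R : Type}

def pathTo (W : Proc A R) (l : W.Node) (t : ℕ) : W.Node := W.parent^[W.depth l - t] l

variable {W : Proc A R} {l : W.Node} {t u : ℕ}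

lemma depth_iterate_parent {j : ℕ} (hj : j ≤ W.depth l) :
    W.depth (W.parent^[j] l) = W.depth l - j := by
  induction j with
  | zero => simp
  | succ j ih =>
    have hd := ih (by omega)
    have hne : W.parent^[j] l ≠ W.root := fun he => by rw [he, W.depth_root] at hd; omega
    have := W.depth_parent _ hne
    rw [Function.iterate_succ_apply']
    omega

lemma depth_pathTo (ht : t ≤ W.depth l) : W.depth (W.pathTo l t) = t := by
  rw [pathTo, depth_iterate_parent (Nat.sub_le _ _)]
  omega

lemma pathTo_depth : W.pathTo l (W.depth l) = l := by
  simp [pathTo]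

lemma pathTo_zero : W.pathTo l 0 = W.root := by
  by_contra hne
  have := W.depth_parent _ hne
  rw [depth_pathTo (Nat.zero_le _)] at this
  omega

lemma isChild_pathTo_succ (ht : t < W.depth l) :
    W.isChild (W.pathTo l (t + 1)) (W.pathTo l t) := by
  refine ⟨fun he => ?_, ?_⟩
  · have := depth_pathTo (W := W) (l := l) (t := t + 1) ht
    rw [he, W.depth_root] at this
    omega
  · rw [pathTo, pathTo, show W.depth l - t = W.depth l - (t + 1) + 1 by omega,
      Function.iterate_succ_apply']

lemma strictAnc_pathTo (htu : t < u) (hu : u ≤ W.depth l) :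
    W.strictAnc (W.pathTo l t) (W.pathTo l u) := by
  induction u, htu using Nat.le_induction with
  | base => exact .single (isChild_pathTo_succ hu)
  | succ u htu ih => exact .head (isChild_pathTo_succ hu) (ih (by omega))

lemma strictAnc_pathTo_self (ht : t < W.depth l) : W.strictAnc (W.pathTo l t) l := by
  simpa only [pathTo_depth] using strictAnc_pathTo ht le_rfl

lemma exists_iterate_of_strictAnc {a b : W.Node} (h : W.strictAnc a b) :
    ∃ j, 0 < j ∧ a = W.parent^[j] b ∧ j + W.depth a = W.depth b := by
  induction h with
  | single h =>
    have := W.depth_parent _ h.1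
    rw [h.2] at this
    exact ⟨1, one_pos, by simp [h.2], by omega⟩
  | tail _ h ih =>
    obtain ⟨j, hj, hje, hjd⟩ := ih
    have := W.depth_parent _ h.1
    rw [h.2] at this
    exact ⟨j + 1, by omega, by rw [Function.iterate_succ_apply', ← hje, h.2], by omega⟩

lemma exists_eq_pathTo_of_strictAnc {s : W.Node} (h : W.strictAnc s l) :
    ∃ t < W.depth l, s = W.pathTo l t := by
  obtain ⟨j, hj, rfl, hd⟩ := exists_iterate_of_strictAnc h
  exact ⟨W.depth l - j, by omega, by rw [pathTo, show W.depth l - (W.depth l - j) = j by omega]⟩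

end Proc

open Proc

section

variable {C : R → CPLaw A} {W : Proc A R} {l s s' : W.Node} {t u : ℕ}

lemma RE_subset_of_strictAnc (h : W.strictAnc s s') : RE W s' ⊆ RE W s :=
  fun _ hr s'' h'' => hr s'' (h.trans h'')

lemma RE_pathTo_antitone (htu : t ≤ u) (hu : u ≤ W.depth l) :
    RE W (W.pathTo l u) ⊆ RE W (W.pathTo l t) := by
  rcases htu.eq_or_lt with rfl | htu
  · exact subset_rfl
  · exact RE_subset_of_strictAnc (strictAnc_pathTo htu hu)

lemma not_isLeaf_of_isChild (h : W.isChild s' s) : ¬ W.isLeaf s := fun hs => hs s' h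

namespace IsWEM

variable (hW : IsWEM C W)
include hW

lemma rule_mem_RE (hs : ¬ W.isLeaf s) : W.rule s ∈ RE W s := (hW.2.2.2.1 s hs).1

lemma sat_body (hs : ¬ W.isLeaf s) : Form.sat (W.interp s) (C (W.rule s)).body :=
  (hW.2.2.2.1 s hs).2.1

lemma not_sat_of_isLeaf (hl : W.isLeaf l) {r : R} (hr : r ∈ RE W l) :
    ¬ Form.sat (W.interp l) (C r).body :=
  hW.2.2.2.2 l hl r hr

lemma interp_eq_insert_of_choice_eq_some {i : ℕ} (h : W.isChild s' s)
    (hc : W.choice s' = some i) :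
    ∃ hi : i < (C (W.rule s)).head.length,
      W.interp s' = insert ((C (W.rule s)).head.get ⟨i, hi⟩).1 (W.interp s) := by
  obtain ⟨hi, hI, -⟩ := ((hW.2.2.2.1 s (not_isLeaf_of_isChild h)).2.2.1 s' h).1 i hc
  exact ⟨hi, hI⟩

lemma interp_eq_of_choice_eq_none (h : W.isChild s' s) (hc : W.choice s' = none) :
    W.interp s' = W.interp s :=
  (((hW.2.2.2.1 s (not_isLeaf_of_isChild h)).2.2.1 s' h).2 hc).2.1

lemma interp_subset_of_isChild (h : W.isChild s' s) : W.interp s ⊆ W.interp s' := by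
  cases hc : W.choice s' with
  | none => rw [hW.interp_eq_of_choice_eq_none h hc]
  | some i =>
    obtain ⟨hi, hI⟩ := hW.interp_eq_insert_of_choice_eq_some h hc
    rw [hI]
    exact Set.subset_insert _ _

lemma exists_choice_of_mem_interp_child {a : A} (h : W.isChild s' s)
    (ha : a ∈ W.interp s') (ha' : a ∉ W.interp s) :
    ∃ i hi, W.choice s' = some i ∧ ((C (W.rule s)).head.get ⟨i, hi⟩).1 = a := by
  cases hc : W.choice s' with
  | none => rw [hW.interp_eq_of_choice_eq_none h hc] at ha; exact absurd ha ha'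
  | some i =>
    obtain ⟨hi, hI⟩ := hW.interp_eq_insert_of_choice_eq_some h hc
    rw [hI] at ha
    exact ⟨i, hi, rfl, (ha.resolve_right ha').symm⟩

lemma mem_headAt_of_mem_interp_child {a : A} (h : W.isChild s' s)
    (ha : a ∈ W.interp s') (ha' : a ∉ W.interp s) : a ∈ (C (W.rule s)).headAt := by
  obtain ⟨i, hi, -, rfl⟩ := hW.exists_choice_of_mem_interp_child h ha ha'
  exact List.mem_map_of_mem (List.get_mem _ _)

lemma interp_pathTo_mono (htu : t ≤ u) (hu : u ≤ W.depth l) :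
    W.interp (W.pathTo l t) ⊆ W.interp (W.pathTo l u) := by
  induction u, htu using Nat.le_induction with
  | base => exact subset_rfl
  | succ u htu ih =>
    exact (ih (by omega)).trans (hW.interp_subset_of_isChild (isChild_pathTo_succ hu))

lemma interp_pathTo_subset (ht : t ≤ W.depth l) : W.interp (W.pathTo l t) ⊆ W.interp l := by
  simpa only [pathTo_depth] using hW.interp_pathTo_mono ht le_rfl

lemma rule_pathTo_mem_RE (htu : t ≤ u) (hu : u < W.depth l) :
    W.rule (W.pathTo l u) ∈ RE W (W.pathTo l t) :=
  RE_pathTo_antitone htu hu.le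
    (hW.rule_mem_RE (not_isLeaf_of_isChild (isChild_pathTo_succ hu)))

end IsWEM

lemma instProg_mem_headAt {σ : Sel C} (q : {r // (σ r).isSome}) :
    (instProg C σ q).1 ∈ (C q.1).headAt :=
  show _ ∈ List.map Prod.fst _ from List.mem_map_of_mem (List.get_mem _ _)

namespace ExtendsPathSel

variable {σ : Sel C} (hσ : ExtendsPathSel C W σ l)
include hσ

lemma map_val_pathTo (ht : t < W.depth l) :
    (σ (W.rule (W.pathTo l t))).map Fin.val = W.choice (W.pathTo l (t + 1)) := by
  refine hσ _ _ (strictAnc_pathTo_self ht) (isChild_pathTo_succ ht) ?_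
  rcases (Nat.succ_le_of_lt ht).eq_or_lt with he | hlt
  · exact .inl (by rw [← Nat.succ_eq_add_one, he, pathTo_depth])
  · exact .inr (strictAnc_pathTo_self hlt)

lemma exists_instProg_eq (hW : IsWEM C W) {a : A} (ht : t < W.depth l)
    (ha : a ∈ W.interp (W.pathTo l (t + 1))) (ha' : a ∉ W.interp (W.pathTo l t)) :
    ∃ q : {r // (σ r).isSome}, q.1 = W.rule (W.pathTo l t) ∧ (instProg C σ q).1 = a := by
  obtain ⟨i, hi, hc, rfl⟩ :=
    hW.exists_choice_of_mem_interp_child (isChild_pathTo_succ ht) ha ha'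
  have hσt := hσ.map_val_pathTo ht
  rw [hc, Option.map_eq_some_iff] at hσt
  obtain ⟨j, hj, rfl⟩ := hσt
  exact ⟨⟨W.rule (W.pathTo l t), by simp [hj]⟩, rfl, by simp [instProg, hj]⟩

lemma instProg_mem_interp (hW : IsWEM C W) (q : {r // (σ r).isSome})
    (hq : q.1 ∉ RE W l) : (instProg C σ q).1 ∈ W.interp l := by
  obtain ⟨s, hs, hrule⟩ : ∃ s, W.strictAnc s l ∧ W.rule s = q.1 := by
    simpa [RE] using hq
  obtain ⟨t, ht, rfl⟩ := exists_eq_pathTo_of_strictAnc hs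
  obtain ⟨r, hr⟩ := q
  subst hrule
  have hc : W.choice (W.pathTo l (t + 1)) = some ((σ _).get hr).val := by
    rw [← hσ.map_val_pathTo ht]
    exact Option.map_eq_some_iff.2 ⟨_, (Option.some_get hr).symm, rfl⟩
  obtain ⟨hi, hI⟩ := hW.interp_eq_insert_of_choice_eq_some (isChild_pathTo_succ ht) hc
  apply hW.interp_pathTo_subset (t := t + 1) ht
  rw [hI]
  exact Set.mem_insert _ _

end ExtendsPathSel

def IsPotential (C : R → CPLaw A) (W : Proc A R) (s : W.Node) (μ : A → TV) : Prop :=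
  ∃ ν n, IsHDS C W s ν n ∧ HDSTerminal C W s ν n ∧ ν n = μ

lemma IsHDS.eq_t_iff {ν : ℕ → A → TV} {n : ℕ} (h : IsHDS C W s ν n) {i : ℕ}
    (hi : i ≤ n) (p : A) : ν i p = TV.t ↔ p ∈ W.interp s := by
  induction i with
  | zero => by_cases hp : p ∈ W.interp s <;> simp [h.1 p, hp]
  | succ i ih =>
    obtain ⟨r, -, -, hhead, hrest⟩ := h.2 i hi
    by_cases hp : p ∈ (C r).headAt ∧ ν i p = TV.f
    · rw [hhead p hp.1 hp.2, ← ih (by omega), hp.2]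
      decide
    · rw [hrest p hp, ih (by omega)]

/-- Each productive derivation step turns a false atom into an unknown one, so the number of
false atoms bounds the length of a derivation sequence. -/
lemma exists_isPotential [Fintype A] (C : R → CPLaw A) (W : Proc A R) (s : W.Node) :
    ∃ μ, IsPotential C W s μ := by
  let nf : (A → TV) → ℕ := fun μ => (Finset.univ.filter (μ · = TV.f)).card
  suffices h : ∀ N ν n, IsHDS C W s ν n → nf (ν n) < N → ∃ μ, IsPotential C W s μ from
    h _ (fun i => ofSet (W.interp s)) 0 ⟨fun _ => rfl, by simp⟩ (Nat.lt_succ_self _)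
  intro N
  induction N with
  | zero => intro _ _ _ hN; omega
  | succ N ih =>
    intro ν n hν hN
    by_cases hterm : HDSTerminal C W s ν n
    · exact ⟨ν n, ν, n, hν, hterm, rfl⟩
    obtain ⟨r, hr, hb, p, hp, hpf⟩ := not_not.mp hterm
    let ν₁ : A → TV := fun a => if a ∈ (C r).headAt ∧ ν n a = TV.f then TV.u else ν n a
    let ν' : ℕ → A → TV := fun i => if i ≤ n then ν i else ν₁
    have hν' : IsHDS C W s ν' (n + 1) := by
      refine ⟨fun a => by simpa [ν'] using hν.1 a, fun i hi => ?_⟩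
      rcases (Nat.lt_succ_iff.1 hi).lt_or_eq with hi | rfl
      · simpa [ν', hi.le, Nat.succ_le_of_lt hi] using hν.2 i hi
      · refine ⟨r, hr, by simpa [ν'] using hb, fun a ha haf => ?_, fun a ha => ?_⟩ <;>
          simp_all [ν', ν₁]
    refine ih ν' (n + 1) hν' (lt_of_lt_of_le ?_ (Nat.lt_succ_iff.1 hN))
    apply Finset.card_lt_card
    refine Finset.ssubset_iff_of_subset (fun a => ?_) |>.2 ⟨p, by simp [hpf], ?_⟩
    · simp only [Finset.mem_filter, Finset.mem_univ, true_and, ν', ν₁,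
        Nat.not_succ_le_self, if_false]
      split_ifs <;> simp_all
    · simp [ν', ν₁, hp, hpf]

namespace IsPotential

variable {μ : A → TV} (hμ : IsPotential C W s μ)
include hμ

lemma eq_t_iff (p : A) : μ p = TV.t ↔ p ∈ W.interp s := by
  obtain ⟨ν, n, hν, -, rfl⟩ := hμ
  exact hν.eq_t_iff le_rfl p

lemma leP_ofSet : leP μ (ofSet (W.interp s)) :=
  leP_ofSet_iff.2 ⟨fun p hp => (hμ.eq_t_iff p).1 hp,
    fun p hp hps => absurd ((hμ.eq_t_iff p).2 hps) (by rw [hp]; decide)⟩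

lemma head_ne_f {r : R} (hr : r ∈ RE W s) (hb : Form.val μ (C r).body ≠ TV.f) {p : A}
    (hp : p ∈ (C r).headAt) : μ p ≠ TV.f := by
  obtain ⟨ν, n, -, hterm, rfl⟩ := hμ
  exact fun hpf => hterm ⟨r, hr, hb, p, hp, hpf⟩

lemma val_body_eq_t (h : IsExec C W) (hs : ¬ W.isLeaf s) :
    Form.val μ (C (W.rule s)).body = TV.t := by
  have hne_f := Form.val_ne_f_of_leP_ofSet hμ.leP_ofSet (h.1.sat_body hs)
  obtain ⟨ν, n, hν, hterm, rfl⟩ := hμ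
  have hne_u := h.2 s hs ν n hν hterm
  cases hv : Form.val (ν n) (C (W.rule s)).body <;> simp_all

end IsPotential

/-- Every atom that eventually becomes true on the path to `l` is caused by a CP-law that
is still available and whose body is not false in the potential, so it is never false in
the potential of a node on that path. -/
lemma IsPotential.ne_f_of_mem_interp (hW : IsWEM C W) (ht : t ≤ W.depth l) {μ : A → TV}
    (hμ : IsPotential C W (W.pathTo l t) μ) {p : A} (hp : p ∈ W.interp l) : μ p ≠ TV.f := by
  suffices h : ∀ u ≤ W.depth l, ∀ p ∈ W.interp (W.pathTo l u), μ p ≠ TV.f by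
    exact h _ le_rfl p (by rwa [pathTo_depth])
  intro u
  induction u with
  | zero => intro _ p hp; simp [pathTo_zero, hW.1] at hp
  | succ u ih =>
    intro (hu : u < W.depth l) p hp
    by_cases hpu : p ∈ W.interp (W.pathTo l u)
    · exact ih (by omega) p hpu
    rcases lt_or_ge u t with hut | htu
    · rw [(hμ.eq_t_iff p).2 (hW.interp_pathTo_mono hut ht hp)]
      decide
    have hchild := isChild_pathTo_succ hu
    refine hμ.head_ne_f (hW.rule_pathTo_mem_RE htu hu) ?_
      (hW.mem_headAt_of_mem_interp_child hchild hp hpu)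
    refine Form.val_ne_f_of_leP_ofSet (leP_ofSet_iff.2 ⟨fun q hq => ?_, fun q hq hqu => ?_⟩)
      (hW.sat_body (not_isLeaf_of_isChild hchild))
    · exact hW.interp_pathTo_mono htu hu.le ((hμ.eq_t_iff q).1 hq)
    · exact ih hu.le q hqu hq

namespace WFITerminal

variable {Q : Type} {P : Q → A × Form A} {ν : ℕ → A → TV} {m : ℕ}
  (h : WFITerminal P ν m)
include h

lemma eq_empty_of_unfounded {U : Set A} (hU : ∀ p ∈ U, ν m p = TV.u)
    (hunf : ∀ q, (P q).1 ∈ U →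
      Form.val (fun p => if p ∈ U then TV.f else ν m p) (P q).2 = TV.f) :
    U = ∅ := by
  have hstep := h _ (.inr ⟨U, hU, fun _ => rfl, hunf⟩) fun p => by
    by_cases hp : p ∈ U
    · exact .inl (hU p hp)
    · exact .inr (if_neg hp).symm
  refine Set.eq_empty_of_forall_notMem fun p hp => ?_
  have := congrFun hstep p
  rw [if_pos hp, hU p hp] at this
  exact absurd this (by decide)

lemma eq_t_of_val_eq_t {q : Q} (hq : Form.val (ν m) (P q).2 = TV.t)
    (hne : ν m (P q).1 ≠ TV.f) : ν m (P q).1 = TV.t := by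
  have hstep := h _ (.inl ⟨q, hq, rfl⟩) fun p => by
    by_cases hp : p = (P q).1
    · subst hp
      cases hv : ν m (P q).1 <;> simp_all [TV.lep, updT]
    · exact .inr (if_neg hp).symm
  rw [← hstep]
  exact if_pos rfl

end WFITerminal

variable {σ : Sel C} {ν : ℕ → A → TV} {m : ℕ}

/-- The first atom of `U ∩ I(l)` along the path to `l` is caused by a CP-law whose body is true
in the potential of its node but false after the unfounded-set step, although both
interpretations are below `I(l) \ U`. -/
lemma ExtendsPathSel.not_mem_of_unfounded [Fintype A] (hσ : ExtendsPathSel C W σ l)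
    (h : IsExec C W)
    {ν ν' : A → TV} {U : Set A} (hν : leP ν (ofSet (W.interp l)))
    (hν' : ∀ p, ν' p = if p ∈ U then TV.f else ν p)
    (hunf : ∀ q, (instProg C σ q).1 ∈ U → Form.val ν' (C q.1).body = TV.f)
    {a : A} (ha : a ∈ W.interp l) : a ∉ U := by
  suffices hpath : ∀ t ≤ W.depth l, ∀ a ∈ W.interp (W.pathTo l t), a ∉ U by
    exact hpath _ le_rfl a (by rwa [pathTo_depth])
  intro t
  induction t with
  | zero => intro _ a ha; simp [pathTo_zero, h.1.1] at ha
  | succ t ih =>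
    intro (ht : t < W.depth l) a ha haU
    by_cases ha' : a ∈ W.interp (W.pathTo l t)
    · exact ih ht.le a ha' haU
    obtain ⟨q, hq, rfl⟩ := hσ.exists_instProg_eq h.1 ht ha ha'
    obtain ⟨μ, hμ⟩ := exists_isPotential C W (W.pathTo l t)
    have hμt := hμ.val_body_eq_t h (not_isLeaf_of_isChild (isChild_pathTo_succ ht))
    have hν'f := hunf q haU
    rw [← hq] at hμt
    have hμJ : leP μ (ofSet (W.interp l \ U)) := by
      refine leP_ofSet_iff.2 ⟨fun p hp => ?_, fun p hp hpJ => ?_⟩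
      · have hps := (hμ.eq_t_iff p).1 hp
        exact ⟨h.1.interp_pathTo_subset ht.le hps, ih ht.le p hps⟩
      · exact hμ.ne_f_of_mem_interp h.1 ht.le hpJ.1 hp
    have hν'J : leP ν' (ofSet (W.interp l \ U)) := by
      obtain ⟨hνt, hνf⟩ := leP_ofSet_iff.1 hν
      refine leP_ofSet_iff.2 ⟨fun p hp => ?_, fun p hp hpJ => ?_⟩ <;>
        rw [hν' p] at hp <;> split_ifs at hp with hpU
      · exact ⟨hνt p hp, hpU⟩
      · exact hpJ.2 hpU
      · exact hνf p hp hpJ.1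
    have := (Form.val_eq_of_leP hμJ (by rw [hμt]; decide)).symm.trans
      (Form.val_eq_of_leP hν'J (by rw [hν'f]; decide))
    rw [hμt, hν'f] at this
    exact absurd this (by decide)

lemma IsExec.leP_ofSet_of_isWFI [Fintype A] (h : IsExec C W) (hl : W.isLeaf l)
    (hσ : ExtendsPathSel C W σ l) (h₁ : IsWFI (instProg C σ) ν m) :
    ∀ j ≤ m, leP (ν j) (ofSet (W.interp l)) := by
  intro j
  induction j with
  | zero => intro _ a; exact .inl (h₁.1 a)
  | succ j ih =>
    intro hj
    have ih := ih (by omega)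
    obtain ⟨hνt, hνf⟩ := leP_ofSet_iff.1 ih
    rcases h₁.2 j (by omega) with ⟨q, hq, hup⟩ | ⟨U, -, hν', hunf⟩
    · have hq : Form.val (ν j) (C q.1).body = TV.t := hq
      have hhead := hσ.instProg_mem_interp h.1 q fun hre =>
        h.1.not_sat_of_isLeaf hl hre (Form.sat_of_leP_ofSet ih hq)
      rw [hup]
      refine leP_ofSet_iff.2 ⟨fun p hp => ?_, fun p hp => ?_⟩ <;>
        unfold updT at hp <;> split_ifs at hp with hpq
      · exact hpq ▸ hhead
      · exact hνt p hp
      · exact hνf p hp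
    · refine leP_ofSet_iff.2 ⟨fun p hp => ?_, fun p hp hpJ => ?_⟩ <;>
        rw [hν' p] at hp <;> split_ifs at hp with hpU
      · exact hνt p hp
      · exact hσ.not_mem_of_unfounded h ih hν' hunf hpJ hpU
      · exact hνf p hp hpJ

section

variable (h : IsExec C W) (hσ : ExtendsPathSel C W σ l) (h₂ : WFITerminal (instProg C σ) ν m)
  (hsound : leP (ν m) (ofSet (W.interp l)))
include h hσ h₂ hsound

/-- The atoms that are false in the potential of a node on the path to `l`, but unknown in
`ν m`, form an unfounded set. -/
lemma IsPotential.eq_f_of_eq_f {t : ℕ} (ht : t ≤ W.depth l) {μ : A → TV}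
    (hμ : IsPotential C W (W.pathTo l t) μ)
    (htrue : ∀ p ∈ W.interp (W.pathTo l t), ν m p = TV.t) {p : A} (hp : μ p = TV.f) :
    ν m p = TV.f := by
  obtain ⟨hνt, -⟩ := leP_ofSet_iff.1 hsound
  have hne_t : ∀ p, μ p = TV.f → ν m p ≠ TV.t := fun p hp hpt =>
    hμ.ne_f_of_mem_interp h.1 ht (hνt p hpt) hp
  obtain ⟨U, hU⟩ : ∃ U : Set A, ∀ p, p ∈ U ↔ μ p = TV.f ∧ ν m p = TV.u :=
    ⟨{p | μ p = TV.f ∧ ν m p = TV.u}, fun _ => Iff.rfl⟩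
  have hle : leP μ (fun p => if p ∈ U then TV.f else ν m p) := fun p => by
    cases hv : μ p with
    | u => exact .inl rfl
    | t =>
      have := htrue p ((hμ.eq_t_iff p).1 hv)
      simp [hU, hv, this, TV.lep]
    | f =>
      by_cases hpU : p ∈ U
      · simp [hpU, TV.lep]
      · cases hv' : ν m p <;> simp_all [TV.lep]
  have hUe := h₂.eq_empty_of_unfounded (fun p hp => ((hU p).1 hp).2) fun q hqU => by
    have hqU := (hU _).1 hqU
    have hre : q.1 ∈ RE W (W.pathTo l t) := by
      by_contra hre
      exact hμ.ne_f_of_mem_interp h.1 ht (hσ.instProg_mem_interp h.1 q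
        fun hre' => hre (RE_pathTo_antitone (u := W.depth l) ht le_rfl
          (by rwa [pathTo_depth]))) hqU.1
    have hbf : Form.val μ (C q.1).body = TV.f := by
      by_contra hb
      exact hμ.head_ne_f hre hb (instProg_mem_headAt q) hqU.1
    exact (Form.val_eq_of_leP hle (φ := (C q.1).body) (by rw [hbf]; decide)).trans hbf
  cases hv : ν m p with
  | f => rfl
  | u => exact absurd ((hU p).2 ⟨hp, hv⟩) (by rw [hUe]; exact id)
  | t => exact absurd hv (hne_t p hp)

/-- Along the path to `l`, each CP-law fired has a body that is true in the potential of its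
node, hence true in `ν m`, so the atom it causes is derived by the well-founded induction. -/
lemma eq_t_of_mem_interp_pathTo [Fintype A] :
    ∀ t ≤ W.depth l, ∀ p ∈ W.interp (W.pathTo l t), ν m p = TV.t := by
  intro t
  induction t with
  | zero => intro _ p hp; simp [pathTo_zero, h.1.1] at hp
  | succ t ih =>
    intro (ht : t < W.depth l) p hp
    by_cases hp' : p ∈ W.interp (W.pathTo l t)
    · exact ih ht.le p hp'
    obtain ⟨q, hq, rfl⟩ := hσ.exists_instProg_eq h.1 ht hp hp'
    obtain ⟨μ, hμ⟩ := exists_isPotential C W (W.pathTo l t)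
    have hle : leP μ (ν m) := fun a => by
      cases hv : μ a with
      | u => exact .inl rfl
      | t => exact .inr (ih ht.le a ((hμ.eq_t_iff a).1 hv)).symm
      | f => exact .inr (hμ.eq_f_of_eq_f h hσ h₂ hsound ht.le (ih ht.le) hv).symm
    have hμt := hμ.val_body_eq_t h (not_isLeaf_of_isChild (isChild_pathTo_succ ht))
    rw [← hq] at hμt
    refine h₂.eq_t_of_val_eq_t ?_ fun hf =>
      (leP_ofSet_iff.1 hsound).2 _ hf (h.1.interp_pathTo_subset (Nat.succ_le_of_lt ht) hp)
    show Form.val (ν m) (C q.1).body = TV.t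
    rw [← hμt]
    exact Form.val_eq_of_leP hle (by rw [hμt]; decide)

lemma eq_ofSet_of_forall_mem_eq_t (hl : W.isLeaf l)
    (htrue : ∀ p ∈ W.interp l, ν m p = TV.t) : ν m = ofSet (W.interp l) := by
  obtain ⟨hνt, -⟩ := leP_ofSet_iff.1 hsound
  obtain ⟨U, hU⟩ : ∃ U : Set A, ∀ p, p ∈ U ↔ ν m p = TV.u :=
    ⟨{p | ν m p = TV.u}, fun _ => Iff.rfl⟩
  have hfill : (fun p => if p ∈ U then TV.f else ν m p) = ofSet (W.interp l) :=
    funext fun p => by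
      by_cases hp : p ∈ W.interp l
      · simp [ofSet, hp, hU, htrue p hp]
      · have := mt (hνt p) hp
        cases hv : ν m p <;> simp_all [ofSet]
  have hUe := h₂.eq_empty_of_unfounded (fun p hp => (hU p).1 hp) fun q hq => by
    rw [hfill, Form.val_ofSet, if_neg]
    refine h.1.not_sat_of_isLeaf hl (by_contra fun hre => ?_)
    have := htrue _ (hσ.instProg_mem_interp h.1 q hre)
    rw [(hU _).1 hq] at this
    exact absurd this (by decide)
  rw [← hfill, hUe]
  simp

end

end

theorem leaf_is_wfm_of_instance_general {A R : Type} [Fintype A]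
    (C : R → CPLaw A) (W : Proc A R) (h : IsExec C W)
    (l : W.Node) (hl : W.isLeaf l)
    (σ : Sel C) (hσ : ExtendsPathSel C W σ l)
    (ν : ℕ → A → TV) (m : ℕ)
    (h₁ : IsWFI (instProg C σ) ν m) (h₂ : WFITerminal (instProg C σ) ν m) :
    ∀ a, ν m a = if a ∈ W.interp l then TV.t else TV.f := by
  have hsound := h.leP_ofSet_of_isWFI hl hσ h₁ m le_rfl
  have htrue : ∀ p ∈ W.interp l, ν m p = TV.t := by
    simpa only [pathTo_depth] using eq_t_of_mem_interp_pathTo h hσ h₂ hsound _ le_rfl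
  exact congrFun (eq_ofSet_of_forall_mem_eq_t h hσ h₂ hsound hl htrue)

/-- Leaves of execution models are well-founded models of the extending instances: if
`l` is a leaf of an execution model of `C` and the `C`-selection `σ` extends `σ(l)`,
then every terminal well-founded induction of `C^σ` has as its limit the total
interpretation corresponding to `I(l)`; i.e., `I(l)` is the exact well-founded model
of `C^σ`. -/
theorem leaf_is_wfm_of_instance {A R : Type} [Fintype A] [Fintype R]
    (C : R → CPLaw A) (W : Proc A R) (h : IsExec C W)
    (l : W.Node) (hl : W.isLeaf l)
    (σ : Sel C) (hσ : ExtendsPathSel C W σ l)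
    (ν : ℕ → A → TV) (m : ℕ)
    (h₁ : IsWFI (instProg C σ) ν m) (h₂ : WFITerminal (instProg C σ) ν m) :
    ∀ a, ν m a = if a ∈ W.interp l then TV.t else TV.f :=
  leaf_is_wfm_of_instance_general C W h l hl σ hσ ν m h₁ h₂

end CP
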